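/- Let F : Set V → ℝ be nondecreasing with F(∅) = 0 and submodular, V finite, and consider maximizing F over subsets of cardinality at most k. Let I_greedy be the set built by k steps of the greedy algorithm (at each step adding an element maximizing the marginal gain). Then F(I_greedy) ≥ (1 - 1/e) · max_{|I| ≤ k} F(I). -/
import Mathlib

lemma submodular_union_bound
    {V : Type*} [DecidableEq V]
    (F : Finset V → ℝ)
    (hmono : ∀ S T : Finset V, S ⊆ T → F S ≤ F T)
    (hsub : ∀ S T : Finset V, S ⊆ T → ∀ i ∉ T,
      F (insert i S) - F S ≥ F (insert i T) - F T)
    (S J : Finset V) :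
    F (S ∪ J) ≤ F S + ∑ j ∈ J, (F (insert j S) - F S) := by
  induction J using Finset.induction_on with
  | empty => simp
  | @insert a J ha ih =>
    rw [Finset.sum_insert ha, Finset.union_insert]
    have hterm : 0 ≤ F (insert a S) - F S := by
      have := hmono S (insert a S) (Finset.subset_insert a S)
      linarith
    by_cases haSJ : a ∈ S ∪ J
    · rw [Finset.insert_eq_self.2 haSJ]
      linarith
    · have h := hsub S (S ∪ J) Finset.subset_union_left a haSJ
      linarith

theorem greedy_submodular_maximization
    {V : Type*} [Fintype V] [DecidableEq V]
    (F : Finset V → ℝ)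
    (hmono : ∀ S T : Finset V, S ⊆ T → F S ≤ F T)
    (hempty : F ∅ = 0)
    (hsub : ∀ S T : Finset V, S ⊆ T → ∀ i ∉ T,
      F (insert i S) - F S ≥ F (insert i T) - F T)
    (k : ℕ) (hk : k ≤ Fintype.card V)
    (I : ℕ → Finset V)
    (hI0 : I 0 = ∅)
    (hgreedy : ∀ t < k, ∃ i ∉ I t,
      I (t + 1) = insert i (I t) ∧
      ∀ i' : V, F (insert i' (I t)) ≤ F (insert i (I t)))
    (J : Finset V) (hJ : J.card ≤ k) :
    (1 - (Real.exp 1)⁻¹) * F J ≤ F (I k) := by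
  rcases Nat.eq_zero_or_pos k with hk0 | hkpos
  · subst hk0
    have : J = ∅ := Finset.card_eq_zero.mp (Nat.le_zero.mp hJ)
    rw [this, hI0, hempty]
    simp
  have hFJ0 : 0 ≤ F J := by
    have := hmono ∅ J (Finset.empty_subset J)
    linarith
  have hkR : (0:ℝ) < (k:ℝ) := by exact_mod_cast hkpos
  set c : ℝ := 1 - 1 / (k:ℝ) with hc_def
  have hc0 : 0 ≤ c := by
    have : 1 / (k:ℝ) ≤ 1 := by
      rw [div_le_one hkR]
      exact_mod_cast hkpos
    rw [hc_def]; linarith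
  -- per-step inequality
  have step : ∀ t < k, F J - F (I (t + 1)) ≤ c * (F J - F (I t)) := by
    intro t ht
    obtain ⟨i, hi, hIt1, hmax⟩ := hgreedy t ht
    set g : ℝ := F (I (t + 1)) - F (I t) with hg_def
    have hg0 : 0 ≤ g := by
      have := hmono (I t) (insert i (I t)) (Finset.subset_insert i (I t))
      rw [hg_def, hIt1]; linarith
    have h1 : F J ≤ F (I t ∪ J) := hmono J _ Finset.subset_union_right
    have h2 := submodular_union_bound F hmono hsub (I t) J
    have h3 : ∑ j ∈ J, (F (insert j (I t)) - F (I t)) ≤ (J.card : ℝ) * g := by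
      calc ∑ j ∈ J, (F (insert j (I t)) - F (I t))
          ≤ ∑ _j ∈ J, g := by
            apply Finset.sum_le_sum
            intro j _
            have := hmax j
            rw [hg_def, hIt1]; linarith
        _ = (J.card : ℝ) * g := by rw [Finset.sum_const, nsmul_eq_mul]
    have h4 : (J.card : ℝ) * g ≤ (k:ℝ) * g := by
      apply mul_le_mul_of_nonneg_right _ hg0
      exact_mod_cast hJ
    have h5 : F J - F (I t) ≤ (k:ℝ) * g := by linarith
    have h6 : (F J - F (I t)) / (k:ℝ) ≤ g := by
      rw [div_le_iff₀ hkR]; linarith [mul_comm g (k:ℝ)]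
    have : F J - F (I (t + 1)) = (F J - F (I t)) - g := by rw [hg_def]; ring
    rw [this, hc_def]
    have h7 : (F J - F (I t)) / (k:ℝ) = (1/(k:ℝ)) * (F J - F (I t)) := by ring
    nlinarith [h6]
  -- iterate
  have key : ∀ t, t ≤ k → F J - F (I t) ≤ c ^ t * F J := by
    intro t
    induction t with
    | zero => intro _; simp [hI0, hempty]
    | succ t ih =>
      intro ht
      have ht' : t < k := Nat.lt_of_succ_le ht
      have h1 := step t ht'
      have h2 := ih (Nat.le_of_lt ht')
      calc F J - F (I (t + 1)) ≤ c * (F J - F (I t)) := h1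
        _ ≤ c * (c ^ t * F J) := mul_le_mul_of_nonneg_left h2 hc0
        _ = c ^ (t + 1) * F J := by ring
  have hck : c ^ k ≤ (Real.exp 1)⁻¹ := by
    have h1 : c ≤ Real.exp (-(1/(k:ℝ))) := by
      have := Real.add_one_le_exp (-(1/(k:ℝ)))
      rw [hc_def]; linarith
    have h2 : c ^ k ≤ (Real.exp (-(1/(k:ℝ)))) ^ k := pow_le_pow_left₀ hc0 h1 k
    have h3 : (Real.exp (-(1/(k:ℝ)))) ^ k = Real.exp ((k:ℝ) * (-(1/(k:ℝ)))) := by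
      rw [← Real.exp_nat_mul]
    have h4 : (k:ℝ) * (-(1/(k:ℝ))) = -1 := by
      field_simp
    rw [h3, h4, Real.exp_neg] at h2
    exact h2
  have hfinal : F J - F (I k) ≤ (Real.exp 1)⁻¹ * F J := by
    calc F J - F (I k) ≤ c ^ k * F J := key k le_rfl
      _ ≤ (Real.exp 1)⁻¹ * F J := mul_le_mul_of_nonneg_right hck hFJ0
  linarith
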